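/- For every natural number n, one has the polynomial identity B_{h_n}(t) = (t^2+t+1)·B_{α_{2n}}(t)^2 + (t+2)·B_{α_{2n}}(t)·B_{α_{2n}+1}(t) + B_{α_{2n}+1}(t)^2 in ℤ[t], where α_{2n} = (2^{2n}−1)/3 is the 2n-th Jacobsthal number. -/
import Mathlib

open Polynomial

/-- The Stern polynomials: `B 0 = 0`, `B 1 = 1`, `B (2n) = t * B n`,
`B (2n+1) = B n + B (n+1)`. -/
noncomputable def sternPoly : ℕ → Polynomial ℤ
  | 0 => 0
  | 1 => 1
  | n + 2 =>
    if h : (n + 2) % 2 = 0 then X * sternPoly ((n + 2) / 2)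
    else sternPoly ((n + 2) / 2) + sternPoly ((n + 2) / 2 + 1)
decreasing_by all_goals omega

/-- `h m = (2/3)·(2^(2m)-1)·(2^(2m+1)+1) + 1`; the division by 3 is exact since
`3 ∣ 2^(2m) - 1`. -/
def hSeq (m : ℕ) : ℕ := 2 * (2 ^ (2 * m) - 1) * (2 ^ (2 * m + 1) + 1) / 3 + 1

/-- The `m`-th Jacobsthal number `α m = (2^m - (-1)^m)/3`. -/
def jacobsthal (m : ℕ) : ℕ := (((2 : ℤ) ^ m - (-1) ^ m) / 3).toNat

lemma stern_even (n : ℕ) : sternPoly (2 * n) = X * sternPoly n := by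
  match n with
  | 0 => simp [sternPoly]
  | k + 1 =>
    rw [show 2 * (k + 1) = 2 * k + 2 from by ring, sternPoly]
    rw [dif_pos (by omega), show (2 * k + 2) / 2 = k + 1 from by omega]

lemma stern_odd (n : ℕ) : sternPoly (2 * n + 1) = sternPoly n + sternPoly (n + 1) := by
  match n with
  | 0 => simp [sternPoly]
  | k + 1 =>
    rw [show 2 * (k + 1) + 1 = (2 * k + 1) + 2 from by ring, sternPoly]
    rw [dif_neg (by omega), show (2 * k + 1 + 2) / 2 = k + 1 from by omega]

lemma stern_4n (n : ℕ) : sternPoly (4 * n) = X ^ 2 * sternPoly n := by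
  rw [show 4 * n = 2 * (2 * n) from by ring, stern_even, stern_even]; ring

lemma stern_4n1 (n : ℕ) :
    sternPoly (4 * n + 1) = (1 + X) * sternPoly n + sternPoly (n + 1) := by
  rw [show 4 * n + 1 = 2 * (2 * n) + 1 from by ring, stern_odd,
    show 2 * n + 1 = 2 * n + 1 from rfl, stern_even, stern_odd]; ring

lemma stern_4n2 (n : ℕ) :
    sternPoly (4 * n + 2) = X * (sternPoly n + sternPoly (n + 1)) := by
  rw [show 4 * n + 2 = 2 * (2 * n + 1) from by ring, stern_even, stern_odd]

lemma stern_4n3 (n : ℕ) :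
    sternPoly (4 * n + 3) = sternPoly n + (1 + X) * sternPoly (n + 1) := by
  rw [show 4 * n + 3 = 2 * (2 * n + 1) + 1 from by ring, stern_odd, stern_odd,
    show 2 * n + 1 + 1 = 2 * (n + 1) from by ring, stern_even]; ring

/-- Auxiliary Jacobsthal numbers: `J n = α (2n)`. -/
def J : ℕ → ℕ
  | 0 => 0
  | n + 1 => 4 * J n + 1

/-- `W m k` has binary expansion `(10)^m 0 (10)^k`. -/
def W (m : ℕ) : ℕ → ℕ
  | 0 => 4 * J m
  | k + 1 => 4 * W m k + 2

lemma three_J (n : ℕ) : 3 * J n + 1 = 4 ^ n := by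
  induction n with
  | zero => rfl
  | succ k ih => rw [J, pow_succ, ← ih]; ring

lemma jacobsthal_two_mul (n : ℕ) : jacobsthal (2 * n) = J n := by
  unfold jacobsthal
  have h : ((2 : ℤ) ^ (2 * n) - (-1) ^ (2 * n)) = 3 * (J n : ℤ) := by
    have := three_J n
    have h4 : ((4 : ℤ)) ^ n = 3 * (J n : ℤ) + 1 := by
      exact_mod_cast congrArg (fun x : ℕ => (x : ℤ)) this.symm
    rw [pow_mul]
    norm_num [h4]
  rw [h]
  simp [Int.mul_ediv_cancel_left]

lemma stern_J_succ (n : ℕ) :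
    sternPoly (J (n + 1)) = (1 + X) * sternPoly (J n) + sternPoly (J n + 1) := by
  rw [J, stern_4n1]

lemma stern_J_succ' (n : ℕ) :
    sternPoly (J (n + 1) + 1) = X * (sternPoly (J n) + sternPoly (J n + 1)) := by
  rw [J, show 4 * J n + 1 + 1 = 4 * J n + 2 from rfl, stern_4n2]

lemma stern_W (m k : ℕ) :
    sternPoly (W m k) =
      (X + X ^ 2) * sternPoly (J m) * sternPoly (J k)
        + X ^ 2 * sternPoly (J m) * sternPoly (J k + 1)
        + X * sternPoly (J m + 1) * sternPoly (J k) ∧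
    sternPoly (W m k + 1) =
      (1 + X + X ^ 2) * sternPoly (J m) * sternPoly (J k)
        + (1 + X) * sternPoly (J m) * sternPoly (J k + 1)
        + sternPoly (J m + 1) * sternPoly (J k)
        + sternPoly (J m + 1) * sternPoly (J k + 1) := by
  induction k with
  | zero =>
    constructor
    · rw [show W m 0 = 4 * J m from rfl, stern_4n]
      simp [J, sternPoly]
    · rw [show W m 0 + 1 = 4 * J m + 1 from rfl, stern_4n1]
      simp [J, sternPoly]
  | succ k ih =>
    obtain ⟨h1, h2⟩ := ih
    constructor
    · rw [show W m (k + 1) = 4 * W m k + 2 from rfl, stern_4n2, h1, h2,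
        stern_J_succ, stern_J_succ']
      ring
    · rw [show W m (k + 1) + 1 = 4 * W m k + 3 from rfl, stern_4n3, h1, h2,
        stern_J_succ, stern_J_succ']
      ring

lemma hSeq_eq (n : ℕ) : hSeq n = 12 * J n ^ 2 + 6 * J n + 1 := by
  unfold hSeq
  have h4 : 2 ^ (2 * n) = 3 * J n + 1 := by rw [pow_mul]; exact (three_J n).symm
  have h5 : 2 ^ (2 * n + 1) = 2 * (3 * J n + 1) := by rw [pow_succ, h4]; ring
  rw [h4, h5, show 3 * J n + 1 - 1 = 3 * J n from by omega,
    show 2 * (3 * J n) * (2 * (3 * J n + 1) + 1) = 3 * (12 * J n ^ 2 + 6 * J n) from by ring,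
    Nat.mul_div_cancel_left _ (by norm_num)]

lemma hSeq_succ (n : ℕ) : hSeq (n + 1) = 4 * W (n + 1) n + 3 := by
  have hw : ∀ k, W (n + 1) k = 4 ^ (k + 1) * J (n + 1) + 2 * J k := by
    intro k
    induction k with
    | zero => simp [W, J]
    | succ k ih => rw [W, ih, show J (k + 1) = 4 * J k + 1 from rfl]; ring
  rw [hSeq_eq, hw, show J (n + 1) = 4 * J n + 1 from rfl,
    show 4 ^ (n + 1) = 4 * 4 ^ n from by ring, ← three_J n]
  ring

theorem stern_h_eq_quadratic_form (n : ℕ) :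
    sternPoly (hSeq n) =
      (X ^ 2 + X + 1) * sternPoly (jacobsthal (2 * n)) ^ 2
        + (X + 2) * sternPoly (jacobsthal (2 * n)) * sternPoly (jacobsthal (2 * n) + 1)
        + sternPoly (jacobsthal (2 * n) + 1) ^ 2 := by
  rw [jacobsthal_two_mul]
  match n with
  | 0 =>
    show sternPoly (hSeq 0) = _
    rw [show hSeq 0 = 1 from rfl, show J 0 = 0 from rfl]
    simp [sternPoly]
  | n + 1 =>
    obtain ⟨h1, h2⟩ := stern_W (n + 1) n
    rw [hSeq_succ, stern_4n3, h1, h2, stern_J_succ, stern_J_succ']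
    ring
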